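/- Let n and m be integers with m odd, 3 ≤ m ≤ n, and let θ : {1,…,n} → ℝ be strictly positive with Ω_{jk} = θ_j θ_k / (1 + θ_j θ_k) for j ≠ k. Let {A_{jk} : 1 ≤ j < k ≤ n} be mutually independent random variables, each taking values in {0,1} with ℙ(A_{jk} = 1) = Ω_{jk}, and extend symmetrically by A_{kj} = A_{jk}. Fix i1 and define φ^{(1)} = ∑ A_{i1 i2}(1 − A_{i2 i3}) ⋯ (1 − A_{i_{m-1} i_m}) A_{i_m i1} and φ^{(2)} = ∑ (1 − A_{i1 i2}) A_{i2 i3} ⋯ A_{i_{m-1} i_m} (1 − A_{i_m i1}), where both sums range over all tuples (i2,…,i_m) of pairwise distinct indices in {1,…,n} \ {i1} and the factors alternate along the closed cycle i1 → i2 → ⋯ → i_m → i1. Then 𝔼[φ^{(1)}] = θ_{i1}^2 · 𝔼[φ^{(2)}]. -/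

import Mathlib

/-!
Fix a cycle `g 0 → g 1 → ⋯ → g (m-1) → g 0` through distinct vertices. Its `m` edges are
distinct pairs, so by independence both alternating products have expectation
`∏ₑ xₑ / (1 + θ θ)`, where `xₑ = θ θ` on the edges carrying `A` and `xₑ = 1` on those
carrying `1 - A`. The denominators agree. As `m` is odd, the edges `{0,1}, {2,3}, …,
{m-1,0}` carrying `A` in `φ⁽¹⁾` meet every vertex once and `g 0` a second time, whereas the
edges `{1,2}, …, {m-2,m-1}` carrying `A` in `φ⁽²⁾` meet every vertex but `g 0` once; so the
numerators differ by the factor `θ (g 0) ^ 2`.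
-/

open MeasureTheory ProbabilityTheory

namespace Fin

variable {m : ℕ} [NeZero m]

-- `(e.val + 1) % m` rather than `e + 1`: this is definitionally the successor in the statement.
def cycleSucc (e : Fin m) : Fin m := ⟨(e.val + 1) % m, Nat.mod_lt _ (NeZero.pos m)⟩

lemma val_cycleSucc (e : Fin m) : (cycleSucc e).val = if e.val + 1 = m then 0 else e.val + 1 := by
  have := e.isLt
  split_ifs with h
  · simp [cycleSucc, h]
  · exact Nat.mod_eq_of_lt (by omega)

lemma cycleSucc_injective : Function.Injective (cycleSucc : Fin m → Fin m) := by
  intro a b h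
  have := congrArg Fin.val h
  rw [val_cycleSucc, val_cycleSucc] at this
  have := a.isLt; have := b.isLt
  ext; split_ifs at * <;> omega

lemma cycleSucc_ne_self (hm : 2 ≤ m) (e : Fin m) : cycleSucc e ≠ e := by
  intro h
  have := congrArg Fin.val h
  rw [val_cycleSucc] at this
  split_ifs at this <;> omega

lemma cycleSucc_cycleSucc_ne_self (hm : 3 ≤ m) (e : Fin m) : cycleSucc (cycleSucc e) ≠ e := by
  intro h
  have := congrArg Fin.val h
  rw [val_cycleSucc, val_cycleSucc] at this
  have := e.isLt
  split_ifs at * <;> omega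

lemma cycleSucc_eq_zero_or_odd_iff (hm : Odd m) (e : Fin m) :
    (cycleSucc e).val = 0 ∨ (cycleSucc e).val % 2 = 1 ↔ e.val % 2 = 0 := by
  have := Nat.odd_iff.mp hm
  have := e.isLt
  rw [val_cycleSucc]
  generalize e.val = k at *
  split_ifs <;> simp <;> omega

lemma cycleSucc_ne_zero_and_even_iff (hm : Odd m) (e : Fin m) :
    (cycleSucc e).val ≠ 0 ∧ (cycleSucc e).val % 2 = 0 ↔ e.val % 2 = 1 := by
  have := Nat.odd_iff.mp hm
  have := e.isLt
  rw [val_cycleSucc]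
  generalize e.val = k at *
  split_ifs <;> omega

variable {M : Type*} [CommMonoid M]

lemma prod_ite_comp_cycleSucc (P Q : Fin m → Prop) [DecidablePred P] [DecidablePred Q]
    (hPQ : ∀ e, Q (cycleSucc e) ↔ P e) (q : Fin m → M) :
    ∏ e, (if P e then q (cycleSucc e) else 1) = ∏ e, (if Q e then q e else 1) :=
  Fintype.prod_bijective _ (Finite.injective_iff_bijective.mp cycleSucc_injective) _ _
    fun e => by simp only [hPQ]

lemma prod_even_mul_cycleSucc (hm : Odd m) (q : Fin m → M) :
    ∏ e : Fin m, (if e.val % 2 = 0 then q e * q (cycleSucc e) else 1) = q 0 * ∏ e, q e := by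
  calc ∏ e : Fin m, (if e.val % 2 = 0 then q e * q (cycleSucc e) else 1)
      = (∏ e : Fin m, if e.val % 2 = 0 then q e else 1) *
          ∏ e : Fin m, if e.val % 2 = 0 then q (cycleSucc e) else 1 := by
        rw [← Finset.prod_mul_distrib]; congr! 1 with e; split_ifs <;> simp
    _ = (∏ e : Fin m, if e.val % 2 = 0 then q e else 1) *
          ∏ e : Fin m, if e.val = 0 ∨ e.val % 2 = 1 then q e else 1 := by
        rw [prod_ite_comp_cycleSucc _ (fun e => e.val = 0 ∨ e.val % 2 = 1)
          (cycleSucc_eq_zero_or_odd_iff hm)]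
    _ = ∏ e : Fin m, (if e = 0 then q e else 1) * q e := by
        rw [← Finset.prod_mul_distrib]; congr! 1 with e
        simp only [Fin.ext_iff, Fin.val_zero]
        split_ifs <;> first | rfl | (exfalso; omega) | simp
    _ = q 0 * ∏ e, q e := by rw [Finset.prod_mul_distrib, Fintype.prod_ite_eq']

lemma mul_prod_odd_mul_cycleSucc (hm : Odd m) (q : Fin m → M) :
    q 0 * ∏ e : Fin m, (if e.val % 2 = 0 then 1 else q e * q (cycleSucc e)) = ∏ e, q e := by
  calc q 0 * ∏ e : Fin m, (if e.val % 2 = 0 then 1 else q e * q (cycleSucc e))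
      = q 0 * ((∏ e : Fin m, if e.val % 2 = 1 then q e else 1) *
          ∏ e : Fin m, if e.val % 2 = 1 then q (cycleSucc e) else 1) := by
        rw [← Finset.prod_mul_distrib]; congr! 2 with e
        split_ifs <;> first | rfl | (exfalso; omega) | simp
    _ = q 0 * ((∏ e : Fin m, if e.val % 2 = 1 then q e else 1) *
          ∏ e : Fin m, if e.val ≠ 0 ∧ e.val % 2 = 0 then q e else 1) := by
        rw [prod_ite_comp_cycleSucc _ (fun e => e.val ≠ 0 ∧ e.val % 2 = 0)
          (cycleSucc_ne_zero_and_even_iff hm)]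
    _ = ∏ e : Fin m, (if e = 0 then q e else 1) * (if e = 0 then 1 else q e) := by
        rw [Finset.prod_mul_distrib, Fintype.prod_ite_eq', ← Finset.prod_mul_distrib]
        congr! 2 with e
        simp only [Fin.ext_iff, Fin.val_zero]
        split_ifs <;> first | rfl | (exfalso; omega) | simp
    _ = ∏ e, q e := by congr! 1 with e; split_ifs <;> simp

lemma prod_even_mul_cycleSucc_eq (hm : Odd m) (q : Fin m → M) :
    ∏ e : Fin m, (if e.val % 2 = 0 then q e * q (cycleSucc e) else 1) =
      q 0 ^ 2 * ∏ e : Fin m, (if e.val % 2 = 0 then 1 else q e * q (cycleSucc e)) := by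
  rw [prod_even_mul_cycleSucc hm, ← mul_prod_odd_mul_cycleSucc hm, pow_two, mul_assoc]

end Fin

section SortedPair

variable {β : Type*} [LinearOrder β]

def sortedPair (a b : β) (h : a ≠ b) : {q : β × β // q.1 < q.2} :=
  ⟨(min a b, max a b), min_lt_max.2 h⟩

lemma eq_and_eq_or_of_sortedPair_eq {a b c d : β} {hab : a ≠ b} {hcd : c ≠ d}
    (h : sortedPair a b hab = sortedPair c d hcd) : a = c ∧ b = d ∨ a = d ∧ b = c := by
  simp only [sortedPair, Subtype.mk.injEq, Prod.mk.injEq] at h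
  rcases le_total a b with hab' | hab' <;> rcases le_total c d with hcd' | hcd' <;>
    simp_all

lemma apply_sortedPair {γ : Type*} {f : β → β → γ} (hf : ∀ a b, f b a = f a b) (a b : β)
    (h : a ≠ b) : f (sortedPair a b h).1.1 (sortedPair a b h).1.2 = f a b := by
  rcases le_total a b with hab | hab <;> simp [sortedPair, hab, hf]

lemma injective_sortedPair_cycle {m : ℕ} [NeZero m] (hm : 3 ≤ m) {g : Fin m → β}
    (hg : Function.Injective g) :
    Function.Injective fun e =>
      sortedPair (g e) (g e.cycleSucc) (hg.ne (e.cycleSucc_ne_self (by omega)).symm) := by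
  intro e f hef
  rcases eq_and_eq_or_of_sortedPair_eq hef with ⟨h, -⟩ | ⟨h₁, h₂⟩
  · exact hg h
  · have hf : f.cycleSucc.cycleSucc = f := by rw [← hg h₁, hg h₂]
    exact absurd hf (f.cycleSucc_cycleSucc_ne_self hm)

end SortedPair

section Integrals

variable {α : Type*} [MeasurableSpace α] {μ : Measure α}

lemma integral_eq_measureReal_of_zero_or_one {f : α → ℝ} (hf : Measurable f)
    (h01 : ∀ ω, f ω = 0 ∨ f ω = 1) : ∫ ω, f ω ∂μ = μ.real {ω | f ω = 1} := by
  have hind : f = Set.indicator {ω | f ω = 1} 1 := by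
    funext ω
    rcases h01 ω with h | h <;> simp [h]
  conv_lhs => rw [hind]
  exact integral_indicator_one (hf (measurableSet_singleton 1))

lemma integrable_fun_prod_of_abs_le_one [IsFiniteMeasure μ] {ι : Type*} (s : Finset ι)
    {Y : ι → α → ℝ} (hY : ∀ i, Measurable (Y i)) (hY1 : ∀ i ω, |Y i ω| ≤ 1) :
    Integrable (fun ω => ∏ i ∈ s, Y i ω) μ :=
  .of_bound (Finset.measurable_prod s fun i _ => hY i).aestronglyMeasurable 1 <|
    ae_of_all _ fun ω => by
      rw [Real.norm_eq_abs, Finset.abs_prod]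
      exact Finset.prod_le_one (fun i _ => abs_nonneg _) fun i _ => hY1 i ω

end Integrals

section BetaModel

variable {β : Type*} [LinearOrder β] {α : Type*} [MeasurableSpace α] {μ : Measure α}
  {A : β → β → α → ℝ} {m : ℕ} [NeZero m]

lemma integral_prod_cycle (hm : 3 ≤ m) (hmeas : ∀ a b, Measurable (A a b))
    (hsymm : ∀ a b, A b a = A a b)
    (hindep : iIndepFun (fun q : {q : β × β // q.1 < q.2} => A q.1.1 q.1.2) μ)
    {g : Fin m → β} (hg : Function.Injective g) {F : Fin m → ℝ → ℝ}
    (hF : ∀ e, Measurable (F e)) :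
    ∫ ω, ∏ e, F e (A (g e) (g e.cycleSucc) ω) ∂μ =
      ∏ e, ∫ ω, F e (A (g e) (g e.cycleSucc) ω) ∂μ := by
  have h := (hindep.precomp (injective_sortedPair_cycle hm hg)).integral_fun_prod_comp
    (fun e => (hmeas _ _).aemeasurable) (fun e => (hF e).aestronglyMeasurable)
  simpa only [apply_sortedPair hsymm] using h

theorem integral_alternating_cycle [IsProbabilityMeasure μ] (hm_odd : Odd m) (hm : 3 ≤ m)
    {θ : β → ℝ} (hθ : ∀ i, 0 < θ i) (hmeas : ∀ a b, Measurable (A a b))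
    (hsymm : ∀ a b, A b a = A a b) (hval : ∀ a b ω, A a b ω = 0 ∨ A a b ω = 1)
    (hindep : iIndepFun (fun q : {q : β × β // q.1 < q.2} => A q.1.1 q.1.2) μ)
    (hmean : ∀ a b, a ≠ b → ∫ ω, A a b ω ∂μ = θ a * θ b / (1 + θ a * θ b))
    {g : Fin m → β} (hg : Function.Injective g) :
    ∫ ω, ∏ e : Fin m, (if e.val % 2 = 0 then A (g e) (g e.cycleSucc) ω
        else 1 - A (g e) (g e.cycleSucc) ω) ∂μ =
      θ (g 0) ^ 2 * ∫ ω, ∏ e : Fin m, (if e.val % 2 = 0 then 1 - A (g e) (g e.cycleSucc) ω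
        else A (g e) (g e.cycleSucc) ω) ∂μ := by
  set p : Fin m → ℝ := fun e => θ (g e) * θ (g e.cycleSucc) with hp
  have hp1 : ∀ e, 1 + p e ≠ 0 := fun e => by
    have := hθ (g e); have := hθ (g e.cycleSucc); positivity
  have hA : ∀ e, ∫ ω, A (g e) (g e.cycleSucc) ω ∂μ = p e / (1 + p e) :=
    fun e => hmean _ _ (hg.ne (e.cycleSucc_ne_self (by omega)).symm)
  have hA' : ∀ e, ∫ ω, 1 - A (g e) (g e.cycleSucc) ω ∂μ = 1 / (1 + p e) := by
    intro e
    have hint : Integrable (A (g e) (g e.cycleSucc)) μ :=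
      .of_bound (hmeas _ _).aestronglyMeasurable 1
        (ae_of_all _ fun ω => by rcases hval (g e) (g e.cycleSucc) ω with h | h <;> simp [h])
    rw [integral_sub (integrable_const 1) hint, integral_const, probReal_univ, one_smul, hA]
    field_simp [hp1 e]
    ring
  rw [integral_prod_cycle hm hmeas hsymm hindep hg
      (F := fun e x => if e.val % 2 = 0 then x else 1 - x) (fun e => by split_ifs <;> fun_prop),
    integral_prod_cycle hm hmeas hsymm hindep hg
      (F := fun e x => if e.val % 2 = 0 then 1 - x else x) (fun e => by split_ifs <;> fun_prop)]
  calc ∏ e : Fin m, ∫ ω, (if e.val % 2 = 0 then A (g e) (g e.cycleSucc) ω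
        else 1 - A (g e) (g e.cycleSucc) ω) ∂μ
      = ∏ e : Fin m, (if e.val % 2 = 0 then p e else 1) / (1 + p e) := by
        refine Finset.prod_congr rfl fun e _ => ?_
        split_ifs <;> simp only [hA, hA']
    _ = θ (g 0) ^ 2 * ∏ e : Fin m, (if e.val % 2 = 0 then 1 else p e) / (1 + p e) := by
        rw [Finset.prod_div_distrib, Finset.prod_div_distrib, hp,
          Fin.prod_even_mul_cycleSucc_eq hm_odd fun e => θ (g e), mul_div_assoc]
    _ = θ (g 0) ^ 2 * ∏ e : Fin m, ∫ ω, (if e.val % 2 = 0 then 1 - A (g e) (g e.cycleSucc) ω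
        else A (g e) (g e.cycleSucc) ω) ∂μ := by
        congr 1
        refine Finset.prod_congr rfl fun e _ => ?_
        split_ifs <;> simp only [hA, hA']

end BetaModel

/-- expected cycle-count ratio in the β-model.
The upper-triangular entries `A j k` (`j < k`) are mutually independent `{0,1}`-valued
random variables with means `Ω j k = θ j θ k / (1 + θ j θ k)`, extended symmetrically.
For odd `m`, `3 ≤ m ≤ n`, the expected alternating cycle count `φ⁽¹⁾` (factors starting
and ending with `A` along the cycle `i1 → i2 → ⋯ → i_m → i1`, over tuples of pairwise
distinct indices in `{1,…,n} \ {i1}`) equals `θ i1 ^ 2` times the expected count `φ⁽²⁾`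
with the roles of `A` and `1 - A` swapped. -/
theorem statement4 (n m : ℕ) (hm_odd : Odd m) (hm3 : 3 ≤ m)
    (θ : Fin n → ℝ) (hθ : ∀ i, 0 < θ i)
    (Ω : Fin n → Fin n → ℝ)
    (hΩ : ∀ j k, j ≠ k → Ω j k = θ j * θ k / (1 + θ j * θ k))
    {α : Type*} [MeasurableSpace α] (μ : Measure α) [IsProbabilityMeasure μ]
    (A : Fin n → Fin n → α → ℝ)
    (hmeas : ∀ j k, Measurable (A j k))
    (hsymm : ∀ j k, A k j = A j k)
    (hval : ∀ j k ω, A j k ω = 0 ∨ A j k ω = 1)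
    (hprob : ∀ j k, j ≠ k → μ {ω | A j k ω = 1} = ENNReal.ofReal (Ω j k))
    (hindep : ProbabilityTheory.iIndepFun
      (fun (q : {q : Fin n × Fin n // q.1 < q.2}) => A q.1.1 q.1.2) μ)
    (i1 : Fin n) :
    ∫ ω, (∑ g ∈ Finset.univ.filter
        (fun g : Fin m → Fin n => Function.Injective g ∧ g ⟨0, by omega⟩ = i1),
      ∏ e : Fin m,
        (if e.val % 2 = 0 then A (g e) (g ⟨(e.val + 1) % m, Nat.mod_lt _ (by omega)⟩) ω
         else 1 - A (g e) (g ⟨(e.val + 1) % m, Nat.mod_lt _ (by omega)⟩) ω)) ∂μ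
    = θ i1 ^ 2 *
      ∫ ω, (∑ g ∈ Finset.univ.filter
          (fun g : Fin m → Fin n => Function.Injective g ∧ g ⟨0, by omega⟩ = i1),
        ∏ e : Fin m,
          (if e.val % 2 = 0 then 1 - A (g e) (g ⟨(e.val + 1) % m, Nat.mod_lt _ (by omega)⟩) ω
           else A (g e) (g ⟨(e.val + 1) % m, Nat.mod_lt _ (by omega)⟩) ω)) ∂μ := by
  have : NeZero m := ⟨by omega⟩
  have hmean : ∀ j k, j ≠ k → ∫ ω, A j k ω ∂μ = θ j * θ k / (1 + θ j * θ k) := by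
    intro j k hjk
    have := hθ j; have := hθ k
    rw [integral_eq_measureReal_of_zero_or_one (hmeas j k) (hval j k), measureReal_def,
      hprob j k hjk, hΩ j k hjk, ENNReal.toReal_ofReal (by positivity)]
  have hbound : ∀ j k ω, |A j k ω| ≤ 1 ∧ |1 - A j k ω| ≤ 1 := fun j k ω => by
    rcases hval j k ω with h | h <;> simp [h]
  rw [integral_finsetSum _ fun g _ => integrable_fun_prod_of_abs_le_one _
      (fun e => by split_ifs <;> fun_prop) (fun e ω => by split_ifs <;> simp [hbound]),
    integral_finsetSum _ fun g _ => integrable_fun_prod_of_abs_le_one _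
      (fun e => by split_ifs <;> fun_prop) (fun e ω => by split_ifs <;> simp [hbound]),
    Finset.mul_sum]
  refine Finset.sum_congr rfl fun g hg => ?_
  obtain ⟨hinj, rfl⟩ := (Finset.mem_filter.mp hg).2
  exact integral_alternating_cycle hm_odd hm3 hθ hmeas hsymm hval hindep hmean hinj
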